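/- arXiv:1604.04369 — 2 statements merged into one kernel-verified Lean document; each statement's English description precedes it below -/
import Mathlib

section
/- The Weyl conformal curvature tensor of the oscillator Lie algebra with bi-invariant Lorentzian metric vanishes identically (the metric is conformally flat): C(x,y)z = R(x,y)z − (1/2)(Rc(x)∧y + x∧Rc(y))z + (τ/6)(x∧y)z = 0 for all x,y,z ∈ 𝔤, where n = 4. -/
/-!
For a bi-invariant metric the Levi-Civita connection is `½ ad`, so by the Jacobi identity the
curvature is `R(x,y)z = -¼[[x,y],z]`. Hence the Ricci form is `-¼` times the Killing form,
`ρ(x,y) = ½ x_Q y_Q` (`ad Q` is a rotation of `span(X₁, Y₁)`), and its trace vanishes because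
`g^{QQ} = 0`. The remaining identity `R(x,y) = ½ (Rc x ∧ y + x ∧ Rc y)` is a coordinate check.
-/

noncomputable section

/-- Bracket of the oscillator Lie algebra on ℝ⁴, coordinates w.r.t. basis (P, X₁, Y₁, Q):
[X₁,Y₁]=P, [Q,X₁]=Y₁, [Q,Y₁]=-X₁. -/
def obr (x y : Fin 4 → ℝ) : Fin 4 → ℝ :=
  ![x 1 * y 2 - x 2 * y 1, x 2 * y 3 - x 3 * y 2, x 3 * y 1 - x 1 * y 3, 0]

/-- The bi-invariant Lorentzian form: g(P,Q)=1, g(X₁,X₁)=g(Y₁,Y₁)=1, others zero. -/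
def og (x y : Fin 4 → ℝ) : ℝ := x 0 * y 3 + x 3 * y 0 + x 1 * y 1 + x 2 * y 2

/-- standard basis vectors -/
def stdv (i : Fin 4) : Fin 4 → ℝ := fun j => if j = i then 1 else 0

def oP : Fin 4 → ℝ := stdv 0
def oX : Fin 4 → ℝ := stdv 1
def oY : Fin 4 → ℝ := stdv 2
def oQ : Fin 4 → ℝ := stdv 3

/-- Levi-Civita connection of a bi-invariant metric: ∇ₓ y = (1/2)[x,y]. -/
def nab (x y : Fin 4 → ℝ) : Fin 4 → ℝ := (1/2 : ℝ) • obr x y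

/-- Curvature tensor R(x,y)z = ∇ₓ∇_y z − ∇_y∇ₓ z − ∇_{[x,y]} z. -/
def Rcur (x y z : Fin 4 → ℝ) : Fin 4 → ℝ :=
  nab x (nab y z) - nab y (nab x z) - nab (obr x y) z

/-- Ricci tensor ρ(x,y) = tr (z ↦ R(z,x)y). -/
def ric (x y : Fin 4 → ℝ) : ℝ := ∑ i, Rcur (stdv i) x y i

/-- (x ∧ y) z = g(y,z) x − g(x,z) y. -/
def owedge (x y z : Fin 4 → ℝ) : Fin 4 → ℝ := og y z • x - og x z • y

/-- Ricci operator, g(Rc x, y) = ρ(x, y). -/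
noncomputable def RcOp (x : Fin 4 → ℝ) : Fin 4 → ℝ := ((1/2 : ℝ) * x 3) • oP

/-- scalar curvature τ = Σ g^{ij} ρ_{ij}; for this metric the matrix of g is its own inverse. -/
noncomputable def otau : ℝ := ∑ i, ∑ j, og (stdv i) (stdv j) * ric (stdv i) (stdv j)

theorem obr_smul_right (c : ℝ) (x y : Fin 4 → ℝ) : obr x (c • y) = c • obr x y := by
  ext i; fin_cases i <;> simp [obr] <;> ring

theorem obr_obr_sub_obr_obr (x y z : Fin 4 → ℝ) :
    obr x (obr y z) - obr y (obr x z) = obr (obr x y) z := by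
  ext i; fin_cases i <;> simp [obr] <;> ring

theorem Rcur_eq_neg_quarter_smul_obr_obr (x y z : Fin 4 → ℝ) :
    Rcur x y z = -(1/4 : ℝ) • obr (obr x y) z := by
  simp only [Rcur, nab, obr_smul_right, smul_smul, ← smul_sub, obr_obr_sub_obr_obr]
  module

theorem ric_eq (x y : Fin 4 → ℝ) : ric x y = 1/2 * x 3 * y 3 := by
  simp [ric, Rcur_eq_neg_quarter_smul_obr_obr, Fin.sum_univ_four, obr, stdv]
  ring

theorem og_RcOp_eq_ric (x y : Fin 4 → ℝ) : og (RcOp x) y = ric x y := by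
  simp [og, RcOp, oP, stdv, ric_eq]

theorem otau_eq_zero : otau = 0 := by
  simp [otau, ric_eq, og, stdv]

theorem Rcur_eq_half_smul_owedge_RcOp (x y z : Fin 4 → ℝ) :
    Rcur x y z = (1/2 : ℝ) • (owedge (RcOp x) y z + owedge x (RcOp y) z) := by
  ext i
  fin_cases i <;> simp [Rcur_eq_neg_quarter_smul_obr_obr, obr, owedge, RcOp, oP, stdv, og] <;> ring

theorem oscillator_conformally_flat :
    (∀ x y : Fin 4 → ℝ, og (RcOp x) y = ric x y) ∧
    ∀ x y z : Fin 4 → ℝ,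
      Rcur x y z - (1/2 : ℝ) • (owedge (RcOp x) y z + owedge x (RcOp y) z)
        + (otau / 6) • owedge x y z = 0 := by
  refine ⟨og_RcOp_eq_ric, fun x y z => ?_⟩
  rw [otau_eq_zero, ← Rcur_eq_half_smul_owedge_RcOp, sub_self, zero_div, zero_smul, add_zero]
end
end

section
/- For a left-invariant vector field V = a e₁ + b e₂ + c e₃ + d e₄ on the oscillator group, the energy density ‖∇V‖² := Σᵢ εᵢ g(∇_{eᵢ}V, ∇_{eᵢ}V) equals (1/2)(b+d)², with ε₁=ε₂=ε₃=1, ε₄=−1; hence ‖∇V‖² = 0 if and only if b = −d, and among left-invariant vector fields this minimizes the energy density. -/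
noncomputable section

def oe1 : Fin 4 → ℝ := -oP + oX
def oe2 : Fin 4 → ℝ := oX + oQ
def oe3 : Fin 4 → ℝ := oY
def oe4 : Fin 4 → ℝ := -oP + oX + oQ

/-!
`∇ₓV = ½[x, V]` has no `Q`-component, so `g(∇ₓV, ∇ₓV)` only sees its `X₁`, `Y₁`-components,
which depend only on the `X₁`, `Y₁`, `Q`-components of `x`. Since `e₂` and `e₄` agree there,
their terms cancel, and `e₁`, `e₃` each contribute `(b + d)² / 4`, where `b + d` is the
`Q`-component of `V`.
-/

lemma og_obr_self (x y : Fin 4 → ℝ) :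
    og (obr x y) (obr x y) = (x 2 * y 3 - x 3 * y 2) ^ 2 + (x 3 * y 1 - x 1 * y 3) ^ 2 := by
  simp only [og, obr, Matrix.cons_val]
  ring

lemma og_nab_self (x y : Fin 4 → ℝ) :
    og (nab x y) (nab x y) = og (obr x y) (obr x y) / 4 := by
  simp only [og, nab, Pi.smul_apply, smul_eq_mul]
  ring

lemma oe1_eq : oe1 = ![-1, 1, 0, 0] := by
  ext i; fin_cases i <;> simp [oe1, oP, oX, stdv]

lemma oe2_eq : oe2 = ![0, 1, 0, 1] := by
  ext i; fin_cases i <;> simp [oe2, oQ, oX, stdv]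

lemma oe3_eq : oe3 = ![0, 0, 1, 0] := by
  ext i; fin_cases i <;> simp [oe3, oY, stdv]

lemma oe4_eq : oe4 = ![-1, 1, 0, 1] := by
  ext i; fin_cases i <;> simp [oe4, oP, oQ, oX, stdv]

lemma smul_oe_add_eq (a b c d : ℝ) :
    a • oe1 + b • oe2 + c • oe3 + d • oe4 = ![-a - d, a + b + d, c, b + d] := by
  rw [oe1_eq, oe2_eq, oe3_eq, oe4_eq]
  ext i
  fin_cases i <;> simp [sub_eq_add_neg]

theorem oscillator_energy_density (a b c d : ℝ)
    (V : Fin 4 → ℝ) (hV : V = a • oe1 + b • oe2 + c • oe3 + d • oe4) :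
    og (nab oe1 V) (nab oe1 V) + og (nab oe2 V) (nab oe2 V)
      + og (nab oe3 V) (nab oe3 V) - og (nab oe4 V) (nab oe4 V)
      = (1/2 : ℝ) * (b + d)^2 ∧
    ((1/2 : ℝ) * (b + d)^2 = 0 ↔ b = -d) ∧
    (0 : ℝ) ≤ (1/2 : ℝ) * (b + d)^2 := by
  rw [smul_oe_add_eq] at hV
  subst hV
  refine ⟨?_, by simp [add_eq_zero_iff_eq_neg], by positivity⟩
  simp only [og_nab_self, og_obr_self, oe1_eq, oe2_eq, oe3_eq, oe4_eq, Matrix.cons_val]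
  ring
end
end
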